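/- arXiv:1603.01829 — 2 statements merged into one kernel-verified Lean document; each statement's English description precedes it below -/
import Mathlib

section
/- Let (Z,d) be a uniformly locally finite metric space. Assume there exists a constant C > 0 such that for every R > 0 and every ε > 0 there exist S > 0 and a Schur multiplier k : Z × Z → ℂ with ‖k‖_S ≤ C such that k(x,y) = 0 whenever d(x,y) > S, and |k(x,y) − 1| < ε whenever d(x,y) ≤ R. Then every ghost operator in the uniform Roe algebra C*_u(Z) is a compact operator on ℓ²(Z). -/
open MeasureTheory Metric Bornology Filter Topology
open scoped ENNReal BoundedContinuousFunction

noncomputable section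

/-- `ℓ²(X)` over `ℂ`. -/
abbrev l2 (X : Type*) : Type _ := lp (fun _ : X => ℂ) 2

/-- The standard basis vector `δ_x` of `ℓ²(X)`. -/
def delta {X : Type*} (x : X) : l2 X := by classical exact lp.single 2 x 1

/-- The matrix entry `a_{x,y} = ⟨a δ_y, δ_x⟩` of a bounded operator on `ℓ²(X)`. -/
def entry {X : Type*} (a : l2 X →L[ℂ] l2 X) (x y : X) : ℂ := inner ℂ (delta x) (a (delta y))

/-- `k` is a Schur multiplier with Schur norm `‖k‖_S ≤ C`: there is a bounded linear map
`M = m_k` on `B(ℓ²(X))` of norm at most `C` satisfying the matrix-entry identity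
`(m_k(a))_{x,y} = k(x,y)·a_{x,y}`. (The map `m_k` is uniquely determined by this identity,
so `‖k‖_S ≤ C` iff such an `M` exists.) -/
def IsSchurMultiplierWithBound {X : Type*} (k : X → X → ℂ) (C : ℝ) : Prop :=
  ∃ M : (l2 X →L[ℂ] l2 X) →L[ℂ] l2 X →L[ℂ] l2 X,
    ‖M‖ ≤ C ∧ ∀ (a : l2 X →L[ℂ] l2 X) (x y : X), entry (M a) x y = k x y * entry a x y

/-- A metric space is uniformly locally finite if there is a uniform bound on the
cardinality of all closed balls of each fixed radius. -/
def UniformlyLocallyFinite (Z : Type*) [MetricSpace Z] : Prop :=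
  ∀ S > (0 : ℝ), ∃ N : ℕ, ∀ z : Z,
    (Metric.closedBall z S).Finite ∧ (Metric.closedBall z S).ncard ≤ N

/-- A bounded operator on `ℓ²(Z)` has propagation at most `R`. -/
def HasPropagationLE {Z : Type*} [MetricSpace Z] (a : l2 Z →L[ℂ] l2 Z) (R : ℝ) : Prop :=
  ∀ x y : Z, R < dist x y → entry a x y = 0

/-- The uniform Roe algebra of `Z`: the operator-norm closure of the set of bounded
operators of finite propagation. -/
def uniformRoeAlgebra (Z : Type*) [MetricSpace Z] : Set (l2 Z →L[ℂ] l2 Z) :=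
  closure {a | ∃ R : ℝ, HasPropagationLE a R}

/-- A ghost operator: the matrix entries vanish at infinity. -/
def IsGhost {Z : Type*} [MetricSpace Z] (a : l2 Z →L[ℂ] l2 Z) : Prop :=
  ∀ ε > (0 : ℝ), ∃ F : Set Z, Bornology.IsBounded F ∧
    ∀ x y : Z, (x, y) ∉ F ×ˢ F → ‖entry a x y‖ < ε

/-!
A ghost of finite propagation is compact: compressing it to a large finite set leaves an
operator of the same propagation with uniformly small entries, and by the Schur test such an
operator has small norm, because in a uniformly locally finite space every row and every column
has at most `N` entries within the propagation bound.

For a general ghost `a` in the uniform Roe algebra choose `b` of finite propagation `R` close to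
`a`, and a Schur multiplier `m_k` supported in an `S`-tube and close to `1` on the `R`-tube.
Then `m_k(a)` is a ghost of propagation at most `S`, hence compact, and
`‖a - m_k(a)‖ ≤ (1 + C) ‖a - b‖ + ‖b - m_k(b)‖`, where the last term is small by the Schur test
applied to the entries `(1 - k(x,y)) b_{x,y}`.
-/

open scoped InnerProductSpace

theorem ENNReal.two_mul_le_add_sq (a b : ℝ≥0∞) : 2 * a * b ≤ a ^ 2 + b ^ 2 := by
  rcases eq_or_ne a ⊤ with rfl | ha
  · simp
  rcases eq_or_ne b ⊤ with rfl | hb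
  · simp
  lift a to NNReal using ha
  lift b to NNReal using hb
  exact_mod_cast _root_.two_mul_le_add_sq a b

section RankOne

variable {𝕜 E F : Type*} [RCLike 𝕜] [NormedAddCommGroup E] [InnerProductSpace 𝕜 E]
  [NormedAddCommGroup F] [InnerProductSpace 𝕜 F]

theorem isCompactOperator_rankOne (x : E) (y : F) :
    IsCompactOperator (InnerProductSpace.rankOne 𝕜 x y) :=
  (isCompactOperator_of_locallyCompactSpace_dom (innerSL 𝕜 y)).clm_comp
    (ContinuousLinearMap.toSpanSingleton 𝕜 x)

end RankOne

theorem isCompactOperator_of_forall_norm_sub_le {𝕜 E F : Type*} [NontriviallyNormedField 𝕜]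
    [SeminormedAddCommGroup E] [NormedSpace 𝕜 E] [NormedAddCommGroup F] [NormedSpace 𝕜 F]
    [CompleteSpace F] {a : E →L[𝕜] F} (K : ℝ)
    (h : ∀ ε > 0, ∃ T : E →L[𝕜] F, IsCompactOperator T ∧ ‖a - T‖ ≤ K * ε) :
    IsCompactOperator a := by
  refine isClosed_setOfPred_isCompactOperator.closure_subset
    (Metric.mem_closure_iff.2 fun ε hε => ?_)
  obtain ⟨T, hT, haT⟩ := h (ε / (|K| + 1)) (by positivity)
  refine ⟨T, hT, ?_⟩
  calc dist a T = ‖a - T‖ := dist_eq_norm a T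
    _ ≤ |K| * (ε / (|K| + 1)) := haT.trans (by gcongr; exact le_abs_self K)
    _ < (|K| + 1) * (ε / (|K| + 1)) := by gcongr; exact lt_add_one _
    _ = ε := by field_simp

section Basis

variable {X : Type*}

theorem inner_delta_left (x : X) (f : l2 X) : ⟪delta x, f⟫_ℂ = f x := by
  classical
  simp [delta, lp.inner_single_left]

theorem orthonormal_delta : Orthonormal ℂ (delta : X → l2 X) := by
  classical
  rw [orthonormal_iff_ite]
  intro x y
  rw [inner_delta_left]
  simp [delta, lp.single_apply, Pi.single_apply]

theorem norm_delta (x : X) : ‖delta x‖ = 1 :=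
  orthonormal_delta.1 x

theorem delta_apply_self (x : X) : delta x x = 1 := by
  rw [← inner_delta_left, inner_self_eq_norm_sq_to_K, norm_delta]
  norm_num

theorem delta_apply_of_ne {x y : X} (h : x ≠ y) : delta y x = 0 := by
  rw [← inner_delta_left, orthonormal_delta.2 h]

theorem hasSum_smul_delta (f : l2 X) : HasSum (fun x => f x • delta x) f := by
  classical
  simpa [delta, ← lp.single_smul] using lp.hasSum_single (p := 2) ENNReal.ofNat_ne_top f

theorem entry_eq_apply (a : l2 X →L[ℂ] l2 X) (x y : X) : entry a x y = a (delta y) x :=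
  inner_delta_left _ _

theorem entry_sub (a b : l2 X →L[ℂ] l2 X) (x y : X) :
    entry (a - b) x y = entry a x y - entry b x y :=
  inner_sub_right _ _ _

theorem norm_entry_le (a : l2 X →L[ℂ] l2 X) (x y : X) : ‖entry a x y‖ ≤ ‖a‖ :=
  calc ‖entry a x y‖ ≤ ‖delta x‖ * ‖a (delta y)‖ := norm_inner_le_norm _ _
    _ ≤ ‖delta x‖ * (‖a‖ * ‖delta y‖) := by gcongr; exact a.le_opNorm _
    _ = ‖a‖ := by simp [norm_delta]

theorem enorm_sq_eq_tsum (f : l2 X) : ‖f‖ₑ ^ 2 = ∑' x, ‖f x‖ₑ ^ 2 := by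
  have h := lp.hasSum_norm (p := 2) (by norm_num) f
  simp only [ENNReal.toReal_ofNat, Real.rpow_two] at h
  simp only [← ofReal_norm, ← ENNReal.ofReal_pow (norm_nonneg _)]
  rw [← h.tsum_eq, ENNReal.ofReal_tsum_of_nonneg (fun _ => by positivity) h.summable]

end Basis

section CoordProj

open InnerProductSpace

variable {X : Type*}

def coordProj (s : Finset X) : l2 X →L[ℂ] l2 X := ∑ x ∈ s, rankOne ℂ (delta x) (delta x)

theorem isCompactOperator_coordProj (s : Finset X) : IsCompactOperator (coordProj s) :=
  Submodule.sum_mem (compactOperator (RingHom.id ℂ) (l2 X) (l2 X)) fun x _ =>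
    isCompactOperator_rankOne (delta x) (delta x)

theorem coordProj_apply (s : Finset X) (f : l2 X) : coordProj s f = ∑ x ∈ s, f x • delta x := by
  simp [coordProj, inner_delta_left]

theorem inner_delta_coordProj_of_mem {s : Finset X} {x : X} (hx : x ∈ s) (f : l2 X) :
    ⟪delta x, coordProj s f⟫_ℂ = f x := by
  rw [coordProj_apply, orthonormal_delta.inner_right_sum _ hx]

theorem inner_delta_coordProj_of_notMem {s : Finset X} {x : X} (hx : x ∉ s) (f : l2 X) :
    ⟪delta x, coordProj s f⟫_ℂ = 0 := by
  rw [coordProj_apply, inner_sum]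
  refine Finset.sum_eq_zero fun z hz => ?_
  rw [inner_smul_right, orthonormal_delta.2 (ne_of_mem_of_not_mem hz hx).symm, mul_zero]

theorem coordProj_delta_of_mem {s : Finset X} {y : X} (hy : y ∈ s) :
    coordProj s (delta y) = delta y := by
  rw [coordProj_apply, Finset.sum_eq_single_of_mem y hy fun x _ hxy => by
    rw [delta_apply_of_ne hxy, zero_smul], delta_apply_self, one_smul]

theorem coordProj_delta_of_notMem {s : Finset X} {y : X} (hy : y ∉ s) :
    coordProj s (delta y) = 0 := by
  rw [coordProj_apply]
  exact Finset.sum_eq_zero fun x hx => by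
    rw [delta_apply_of_ne (ne_of_mem_of_not_mem hx hy), zero_smul]

theorem entry_coordProj_comp_of_mem (a : l2 X →L[ℂ] l2 X) {s : Finset X} {x y : X}
    (hx : x ∈ s) (hy : y ∈ s) : entry (coordProj s ∘L a ∘L coordProj s) x y = entry a x y := by
  simp only [entry, ContinuousLinearMap.comp_apply, coordProj_delta_of_mem hy,
    inner_delta_coordProj_of_mem hx, inner_delta_left]

theorem entry_coordProj_comp_eq_zero (a : l2 X →L[ℂ] l2 X) {s : Finset X} {x y : X}
    (hxy : ¬(x ∈ s ∧ y ∈ s)) : entry (coordProj s ∘L a ∘L coordProj s) x y = 0 := by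
  simp only [entry, ContinuousLinearMap.comp_apply]
  by_cases hx : x ∈ s
  · rw [coordProj_delta_of_notMem fun hy => hxy ⟨hx, hy⟩, map_zero, map_zero, inner_zero_right]
  · exact inner_delta_coordProj_of_notMem hx _

end CoordProj

section SchurTest

variable {Z : Type*}

theorem enorm_inner_le_tsum_tsum (a : l2 Z →L[ℂ] l2 Z) (ξ η : l2 Z) :
    ‖⟪η, a ξ⟫_ℂ‖ₑ ≤ ∑' y, ∑' x, ‖η x‖ₑ * ‖entry a x y‖ₑ * ‖ξ y‖ₑ := by
  have hrow : HasSum (fun y => ξ y * ⟪η, a (delta y)⟫_ℂ) ⟪η, a ξ⟫_ℂ := by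
    simpa only [ContinuousLinearMap.map_smul, innerSL_apply_apply, smul_eq_mul] using
      ((hasSum_smul_delta ξ).mapL a).mapL (innerSL ℂ η)
  have hcol (y : Z) : ‖⟪η, a (delta y)⟫_ℂ‖ₑ ≤ ∑' x, ‖η x‖ₑ * ‖entry a x y‖ₑ :=
    (lp.hasSum_inner (𝕜 := ℂ) η (a (delta y))).enorm_le_of_bounded ENNReal.summable.hasSum
      fun x => by simp [entry_eq_apply, mul_comm]
  calc ‖⟪η, a ξ⟫_ℂ‖ₑ ≤ ∑' y, ‖ξ y‖ₑ * ‖⟪η, a (delta y)⟫_ℂ‖ₑ :=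
        hrow.enorm_le_of_bounded ENNReal.summable.hasSum fun y => (enorm_mul _ _).le
    _ ≤ ∑' y, (∑' x, ‖η x‖ₑ * ‖entry a x y‖ₑ) * ‖ξ y‖ₑ :=
        ENNReal.tsum_le_tsum fun y => by rw [mul_comm]; gcongr; exact hcol y
    _ = ∑' y, ∑' x, ‖η x‖ₑ * ‖entry a x y‖ₑ * ‖ξ y‖ₑ := by simp_rw [ENNReal.tsum_mul_right]

section Counting

variable [PseudoMetricSpace Z] {S : ℝ} {N : ℕ}

theorem tsum_indicator_closedBall_const (z : Z) (c : ℝ≥0∞) :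
    ∑' x, (closedBall z S).indicator (fun _ => c) x = (closedBall z S).encard * c := by
  rw [← tsum_subtype, ENNReal.tsum_set_const]

theorem tsum_encard_closedBall_mul_le (hN : ∀ z : Z, (closedBall z S).encard ≤ N)
    (f : Z → ℝ≥0∞) : ∑' z, (closedBall z S).encard * f z ≤ N * ∑' z, f z :=
  calc ∑' z, (closedBall z S).encard * f z ≤ ∑' z, N * f z :=
        ENNReal.tsum_le_tsum fun z => by gcongr; exact_mod_cast hN z
    _ = N * ∑' z, f z := ENNReal.tsum_mul_left

theorem tsum_tsum_indicator_closedBall_le (hN : ∀ z : Z, (closedBall z S).encard ≤ N)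
    (f : Z → ℝ≥0∞) : ∑' y, ∑' x, (closedBall y S).indicator f x ≤ N * ∑' x, f x := by
  have hswap (x y : Z) :
      (closedBall y S).indicator f x = (closedBall x S).indicator (fun _ => f x) y := by
    simp [Set.indicator, dist_comm]
  rw [ENNReal.tsum_comm]
  simp_rw [hswap, tsum_indicator_closedBall_const]
  exact tsum_encard_closedBall_mul_le hN f

end Counting

variable [MetricSpace Z] {a : l2 Z →L[ℂ] l2 Z} {S δ : ℝ} {N : ℕ}

theorem two_mul_enorm_inner_le_of_hasPropagationLE (hN : ∀ z : Z, (closedBall z S).encard ≤ N)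
    (ha : HasPropagationLE a S) (hδ : ∀ x y, ‖entry a x y‖ ≤ δ) (ξ η : l2 Z) :
    2 * ‖⟪η, a ξ⟫_ℂ‖ₑ ≤ ENNReal.ofReal δ * (N * ‖η‖ₑ ^ 2 + N * ‖ξ‖ₑ ^ 2) := by
  -- AM-GM splits each term between its row and its column; each has at most `N` band entries.
  have hpt (x y : Z) : 2 * (‖η x‖ₑ * ‖entry a x y‖ₑ * ‖ξ y‖ₑ) ≤ ENNReal.ofReal δ *
      ((closedBall y S).indicator (fun x => ‖η x‖ₑ ^ 2) x +
        (closedBall y S).indicator (fun _ => ‖ξ y‖ₑ ^ 2) x) := by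
    by_cases hxy : x ∈ closedBall y S
    · rw [Set.indicator_of_mem hxy, Set.indicator_of_mem hxy]
      calc 2 * (‖η x‖ₑ * ‖entry a x y‖ₑ * ‖ξ y‖ₑ) = ‖entry a x y‖ₑ * (2 * ‖η x‖ₑ * ‖ξ y‖ₑ) := by
            ring
        _ ≤ ENNReal.ofReal δ * (‖η x‖ₑ ^ 2 + ‖ξ y‖ₑ ^ 2) := by
            gcongr
            · rw [← ofReal_norm]; exact ENNReal.ofReal_le_ofReal (hδ x y)
            · exact ENNReal.two_mul_le_add_sq _ _
    · rw [ha x y (not_le.1 hxy)]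
      simp
  calc 2 * ‖⟪η, a ξ⟫_ℂ‖ₑ ≤ 2 * ∑' y, ∑' x, ‖η x‖ₑ * ‖entry a x y‖ₑ * ‖ξ y‖ₑ := by
        gcongr; exact enorm_inner_le_tsum_tsum a ξ η
    _ = ∑' y, ∑' x, 2 * (‖η x‖ₑ * ‖entry a x y‖ₑ * ‖ξ y‖ₑ) := by
        simp_rw [ENNReal.tsum_mul_left]
    _ ≤ ∑' y, ∑' x, ENNReal.ofReal δ * ((closedBall y S).indicator (fun x => ‖η x‖ₑ ^ 2) x +
          (closedBall y S).indicator (fun _ => ‖ξ y‖ₑ ^ 2) x) :=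
        ENNReal.tsum_le_tsum fun y => ENNReal.tsum_le_tsum fun x => hpt x y
    _ = ENNReal.ofReal δ * (∑' y, ∑' x, (closedBall y S).indicator (fun x => ‖η x‖ₑ ^ 2) x +
          ∑' y, (closedBall y S).encard * ‖ξ y‖ₑ ^ 2) := by
        simp_rw [ENNReal.tsum_mul_left, ENNReal.tsum_add, tsum_indicator_closedBall_const]
    _ ≤ ENNReal.ofReal δ * (N * ‖η‖ₑ ^ 2 + N * ‖ξ‖ₑ ^ 2) := by
        rw [enorm_sq_eq_tsum, enorm_sq_eq_tsum]
        gcongr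
        · exact tsum_tsum_indicator_closedBall_le hN _
        · exact tsum_encard_closedBall_mul_le hN _

theorem norm_le_of_hasPropagationLE (hN : ∀ z : Z, (closedBall z S).encard ≤ N)
    (ha : HasPropagationLE a S) (hδ₀ : 0 ≤ δ) (hδ : ∀ x y, ‖entry a x y‖ ≤ δ) :
    ‖a‖ ≤ N * δ := by
  refine ContinuousLinearMap.opNorm_le_of_re_inner_le (by positivity) fun ξ η hξ hη => ?_
  have h := two_mul_enorm_inner_le_of_hasPropagationLE hN ha hδ ξ η
  rw [← ofReal_norm, ← ofReal_norm, ← ofReal_norm, hξ, hη, ENNReal.ofReal_one, one_pow,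
    mul_one] at h
  have h' : ENNReal.ofReal (2 * ‖⟪η, a ξ⟫_ℂ‖) ≤ ENNReal.ofReal (2 * (N * δ)) := by
    convert h using 1
    · rw [ENNReal.ofReal_mul zero_le_two, ENNReal.ofReal_ofNat]
    · rw [ENNReal.ofReal_mul zero_le_two, ENNReal.ofReal_mul (by positivity),
        ENNReal.ofReal_ofNat, ENNReal.ofReal_natCast]
      ring
  rw [ENNReal.ofReal_le_ofReal_iff (by positivity)] at h'
  calc RCLike.re ⟪a ξ, η⟫_ℂ ≤ ‖⟪a ξ, η⟫_ℂ‖ := RCLike.re_le_norm _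
    _ = ‖⟪η, a ξ⟫_ℂ‖ := norm_inner_symm _ _
    _ ≤ N * δ := by linarith

end SchurTest

section UniformRoe

variable {Z : Type*} [MetricSpace Z]

theorem UniformlyLocallyFinite.exists_encard_closedBall_le (hZ : UniformlyLocallyFinite Z)
    {S : ℝ} (hS : 0 < S) : ∃ N : ℕ, ∀ z : Z, (closedBall z S).encard ≤ N := by
  obtain ⟨N, hN⟩ := hZ S hS
  exact ⟨N, fun z => (hN z).1.cast_ncard_eq ▸ by exact_mod_cast (hN z).2⟩

theorem UniformlyLocallyFinite.finite_of_isBounded (hZ : UniformlyLocallyFinite Z) {F : Set Z}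
    (hF : IsBounded F) : F.Finite := by
  rcases F.eq_empty_or_nonempty with rfl | ⟨z, -⟩
  · exact Set.finite_empty
  obtain ⟨r, hr⟩ := hF.subset_closedBall z
  obtain ⟨N, hN⟩ := hZ (max r 1) (by positivity)
  exact (hN z).1.subset (hr.trans (closedBall_subset_closedBall (le_max_left r 1)))

theorem HasPropagationLE.mono {a : l2 Z →L[ℂ] l2 Z} {R R' : ℝ} (ha : HasPropagationLE a R)
    (hR : R ≤ R') : HasPropagationLE a R' :=
  fun x y hxy => ha x y (hR.trans_lt hxy)

theorem IsGhost.isCompactOperator_of_hasPropagationLE (hZ : UniformlyLocallyFinite Z)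
    {a : l2 Z →L[ℂ] l2 Z} {S : ℝ} (hg : IsGhost a) (ha : HasPropagationLE a S) :
    IsCompactOperator a := by
  obtain ⟨N, hN⟩ := hZ.exists_encard_closedBall_le (S := max S 1) (by positivity)
  refine isCompactOperator_of_forall_norm_sub_le N fun ε hε => ?_
  obtain ⟨F, hFb, hF⟩ := hg ε hε
  set s := (hZ.finite_of_isBounded hFb).toFinset
  set T := coordProj s ∘L a ∘L coordProj s
  have hentry (x y : Z) :
      entry (a - T) x y = 0 ∨ (x, y) ∉ F ×ˢ F ∧ entry (a - T) x y = entry a x y := by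
    rw [entry_sub]
    by_cases hs : x ∈ s ∧ y ∈ s
    · exact .inl (by rw [entry_coordProj_comp_of_mem a hs.1 hs.2, sub_self])
    · exact .inr ⟨fun hxy => hs (by simpa [s] using hxy),
        by rw [entry_coordProj_comp_eq_zero a hs, sub_zero]⟩
  refine ⟨T, (isCompactOperator_coordProj s).comp_clm _, ?_⟩
  refine norm_le_of_hasPropagationLE hN (fun x y hxy => ?_) hε.le fun x y => ?_
  · rcases hentry x y with h | ⟨-, h⟩
    exacts [h, h ▸ ha.mono (le_max_left S 1) x y hxy]
  · rcases hentry x y with h | ⟨hxy, h⟩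
    · exact h ▸ norm_zero.trans_le hε.le
    · exact h ▸ (hF x y hxy).le

end UniformRoe

section SchurMultiplier

open InnerProductSpace

variable {Z : Type*}

def IsEntrywiseMul (k : Z → Z → ℂ) (M : (l2 Z →L[ℂ] l2 Z) →L[ℂ] l2 Z →L[ℂ] l2 Z) : Prop :=
  ∀ (a : l2 Z →L[ℂ] l2 Z) (x y : Z), entry (M a) x y = k x y * entry a x y

variable {k : Z → Z → ℂ} {M : (l2 Z →L[ℂ] l2 Z) →L[ℂ] l2 Z →L[ℂ] l2 Z}

theorem IsEntrywiseMul.norm_le_opNorm (hM : IsEntrywiseMul k M) (x y : Z) : ‖k x y‖ ≤ ‖M‖ := by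
  set r := rankOne ℂ (delta x) (delta y)
  have hr : entry r x y = 1 := by
    simp [r, entry, inner_self_eq_norm_sq_to_K, norm_delta]
  calc ‖k x y‖ = ‖entry (M r) x y‖ := by rw [hM, hr, mul_one]
    _ ≤ ‖M r‖ := norm_entry_le _ x y
    _ ≤ ‖M‖ * ‖r‖ := M.le_opNorm r
    _ = ‖M‖ := by simp [r, norm_delta]

variable [MetricSpace Z]

theorem IsEntrywiseMul.isGhost (hM : IsEntrywiseMul k M) {a : l2 Z →L[ℂ] l2 Z}
    (ha : IsGhost a) : IsGhost (M a) := by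
  intro ε hε
  obtain ⟨F, hFb, hF⟩ := ha (ε / (‖M‖ + 1)) (by positivity)
  refine ⟨F, hFb, fun x y hxy => ?_⟩
  calc ‖entry (M a) x y‖ = ‖k x y‖ * ‖entry a x y‖ := by rw [hM, norm_mul]
    _ ≤ ‖M‖ * (ε / (‖M‖ + 1)) :=
        mul_le_mul (hM.norm_le_opNorm x y) (hF x y hxy).le (norm_nonneg _) (norm_nonneg M)
    _ < (‖M‖ + 1) * (ε / (‖M‖ + 1)) := by gcongr; exact lt_add_one _
    _ = ε := by field_simp

theorem IsEntrywiseMul.hasPropagationLE (hM : IsEntrywiseMul k M) {S : ℝ}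
    (hk : ∀ x y, S < dist x y → k x y = 0) (a : l2 Z →L[ℂ] l2 Z) : HasPropagationLE (M a) S :=
  fun x y hxy => by rw [hM, hk x y hxy, zero_mul]

theorem IsEntrywiseMul.norm_sub_le (hM : IsEntrywiseMul k M) {b : l2 Z →L[ℂ] l2 Z}
    {R δ : ℝ} {N : ℕ} (hN : ∀ z : Z, (closedBall z R).encard ≤ N) (hb : HasPropagationLE b R)
    (hδ : 0 ≤ δ) (hk : ∀ x y, dist x y ≤ R → ‖k x y - 1‖ ≤ δ) :
    ‖b - M b‖ ≤ N * (δ * ‖b‖) := by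
  have hentry (x y : Z) : entry (b - M b) x y = (1 - k x y) * entry b x y := by
    rw [entry_sub, hM]; ring
  refine norm_le_of_hasPropagationLE hN (fun x y hxy => ?_) (by positivity) fun x y => ?_
  · rw [hentry, hb x y hxy, mul_zero]
  · rw [hentry, norm_mul, norm_sub_rev]
    by_cases hxy : dist x y ≤ R
    · exact mul_le_mul (hk x y hxy) (norm_entry_le b x y) (norm_nonneg _) hδ
    · rw [hb x y (not_le.1 hxy), norm_zero, mul_zero]
      positivity

end SchurMultiplier

theorem ghosts_are_compact_of_schur_multipliers_general
    (Z : Type*) [MetricSpace Z] (hZ : UniformlyLocallyFinite Z)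
    (C : ℝ)
    (h : ∀ R > (0 : ℝ), ∀ ε > (0 : ℝ), ∃ S > (0 : ℝ), ∃ k : Z → Z → ℂ,
      IsSchurMultiplierWithBound k C ∧ (∀ x y : Z, S < dist x y → k x y = 0) ∧
      ∀ x y : Z, dist x y ≤ R → ‖k x y - 1‖ < ε) :
    ∀ a ∈ uniformRoeAlgebra Z, IsGhost a → IsCompactOperator (⇑a) := by
  intro a ha hg
  refine isCompactOperator_of_forall_norm_sub_le (C + 2) fun ε hε => ?_
  obtain ⟨b, ⟨R, hb⟩, hab⟩ := Metric.mem_closure_iff.1 ha ε hε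
  obtain ⟨N, hN⟩ := hZ.exists_encard_closedBall_le (S := max R 1) (by positivity)
  obtain ⟨S, -, k, ⟨M, hMC, hM : IsEntrywiseMul k M⟩, hk₀, hk₁⟩ :=
    h (max R 1) (by positivity) (ε / (N * ‖b‖ + 1)) (by positivity)
  refine ⟨M a, (hM.isGhost hg).isCompactOperator_of_hasPropagationLE hZ
    (hM.hasPropagationLE hk₀ a), ?_⟩
  have hab : ‖a - b‖ ≤ ε := (dist_eq_norm a b ▸ hab).le
  have hMab : ‖M (a - b)‖ ≤ C * ε :=
    (M.le_opNorm _).trans (mul_le_mul hMC hab (norm_nonneg _) ((norm_nonneg M).trans hMC))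
  have hbM : ‖b - M b‖ ≤ ε :=
    calc ‖b - M b‖ ≤ N * (ε / (N * ‖b‖ + 1) * ‖b‖) :=
          hM.norm_sub_le hN (hb.mono (le_max_left R 1)) (by positivity)
            fun x y hxy => (hk₁ x y hxy).le
      _ ≤ ε := by
          rw [div_mul_eq_mul_div, mul_div_assoc', div_le_iff₀ (by positivity)]
          nlinarith [norm_nonneg b]
  calc ‖a - M a‖ = ‖(a - b) - M (a - b) + (b - M b)‖ := by rw [map_sub]; abel_nf
    _ ≤ ‖a - b‖ + ‖M (a - b)‖ + ‖b - M b‖ :=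
        (norm_add_le _ _).trans (add_le_add_left (norm_sub_le _ _) _)
    _ ≤ (C + 2) * ε := by linarith

/-- If a uniformly locally finite metric space `Z` admits uniformly
bounded Schur multipliers supported near the diagonal and close to `1` on tubes, then
every ghost operator in the uniform Roe algebra of `Z` is compact. -/
theorem ghosts_are_compact_of_schur_multipliers
    (Z : Type*) [MetricSpace Z] (hZ : UniformlyLocallyFinite Z)
    (C : ℝ) (hC : 0 < C)
    (h : ∀ R > (0 : ℝ), ∀ ε > (0 : ℝ), ∃ S > (0 : ℝ), ∃ k : Z → Z → ℂ,
      IsSchurMultiplierWithBound k C ∧ (∀ x y : Z, S < dist x y → k x y = 0) ∧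
      ∀ x y : Z, dist x y ≤ R → ‖k x y - 1‖ < ε) :
    ∀ a ∈ uniformRoeAlgebra Z, IsGhost a → IsCompactOperator (⇑a) :=
  ghosts_are_compact_of_schur_multipliers_general Z hZ C h
end
end

section
/- Let G be a locally compact second countable group equipped with a proper left-invariant compatible metric d. Then the following are equivalent: (1) the metric space (G,d) has property A; (2) every uniformly locally finite metric lattice (Z,d) in G has property A (as a metric space with the restricted metric); (3) there exists a uniformly locally finite metric lattice (Z,d) in G having property A. -/
/-!
Restricting kernels gives (1) ⇒ (2), and a maximal `1`-separated subset is a uniformly locally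
finite lattice (properness and left invariance bound the number of separated points in every
ball by a covering number of one fixed compact ball), which gives (2) ⇒ (3).

For (3) ⇒ (1), let every point of `G` lie within `R` of the lattice `Z` and take a partition of
unity `ρ` on `G` subordinate to the balls of radius `R + 1` around the points of `Z`. A kernel
`k` on `Z` extends to `k' x y = ∑ ρ_z(x) ρ_w(y) k(z, w)`: this is of positive type, continuous
since `ρ` is locally finite, its support is only `2(R + 1)` wider than that of `k`, and it is a
convex combination of values `k(z, w)` with `d z w ≤ d x y + 2(R + 1)`.
-/

open MeasureTheory Metric Bornology Filter Topology
open scoped ENNReal BoundedContinuousFunction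

noncomputable section

/-- A kernel of positive type: all quadratic combinations are real and nonnegative. -/
def IsPositiveTypeKernel {X : Type*} (k : X → X → ℂ) : Prop :=
  ∀ (n : ℕ) (x : Fin n → X) (c : Fin n → ℂ),
    ∃ r : ℝ, 0 ≤ r ∧
      ∑ i : Fin n, ∑ j : Fin n, c i * (starRingEnd ℂ) (c j) * k (x i) (x j) = (r : ℂ)

/-- `d` is a proper left-invariant metric on the topological group `G` that induces
(is compatible with) its topology. -/
structure IsProperLeftInvariantCompatibleMetric (G : Type*) [Group G] [TopologicalSpace G]
    (d : G → G → ℝ) : Prop where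
  refl : ∀ x, d x x = 0
  eq_of : ∀ {x y}, d x y = 0 → x = y
  symm : ∀ x y, d x y = d y x
  triangle : ∀ x y z, d x z ≤ d x y + d y z
  left_invariant : ∀ g x y, d (g * x) (g * y) = d x y
  compatible : ∀ s : Set G, IsOpen s ↔ ∀ x ∈ s, ∃ ε > 0, ∀ y, d x y < ε → y ∈ s
  proper : ∀ (x : G) (r : ℝ), IsCompact {y : G | d x y ≤ r}

def PropertyAWith (G : Type*) [TopologicalSpace G] (d : G → G → ℝ) : Prop :=
  ∀ R > (0 : ℝ), ∀ ε > (0 : ℝ), ∃ S > (0 : ℝ), ∃ k : G → G → ℂ,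
    Continuous (Function.uncurry k) ∧ IsPositiveTypeKernel k ∧
    (∀ x y, S < d x y → k x y = 0) ∧ ∀ x y, d x y ≤ R → ‖k x y - 1‖ < ε

/-- `Z` is a metric lattice in `(G,d)`: uniformly discrete and coarsely dense. -/
def IsMetricLattice {G : Type*} (d : G → G → ℝ) (Z : Set G) : Prop :=
  (∃ δ > (0 : ℝ), ∀ z ∈ Z, ∀ w ∈ Z, z ≠ w → δ ≤ d z w) ∧
  ∃ R > (0 : ℝ), ∀ x : G, ∃ z ∈ Z, d z x ≤ R

/-- The subset `Z` is uniformly locally finite for the restricted metric. -/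
def SubsetUniformlyLocallyFinite {G : Type*} (d : G → G → ℝ) (Z : Set G) : Prop :=
  ∀ S > (0 : ℝ), ∃ N : ℕ, ∀ z ∈ Z,
    {x ∈ Z | d z x ≤ S}.Finite ∧ {x ∈ Z | d z x ≤ S}.ncard ≤ N

/-- (Yu's) property A of the subset `Z` with the restricted metric. -/
def SubsetPropertyA {G : Type*} [TopologicalSpace G] (d : G → G → ℝ) (Z : Set G) : Prop :=
  ∀ R > (0 : ℝ), ∀ ε > (0 : ℝ), ∃ S > (0 : ℝ), ∃ k : Z → Z → ℂ,
    Continuous (Function.uncurry k) ∧ IsPositiveTypeKernel k ∧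
    (∀ x y : Z, S < d x y → k x y = 0) ∧ ∀ x y : Z, d x y ≤ R → ‖k x y - 1‖ < ε


namespace IsPositiveTypeKernel

variable {X Y : Type*} {k : X → X → ℂ}

theorem comp (hk : IsPositiveTypeKernel k) (f : Y → X) :
    IsPositiveTypeKernel fun a b => k (f a) (f b) :=
  fun n x c => hk n (f ∘ x) c

theorem exists_sum_finset_eq (hk : IsPositiveTypeKernel k) (s : Finset X) (c : X → ℂ) :
    ∃ r : ℝ, 0 ≤ r ∧
      ∑ x ∈ s, ∑ y ∈ s, c x * (starRingEnd ℂ) (c y) * k x y = (r : ℂ) := by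
  obtain ⟨r, hr, hsum⟩ := hk s.card (fun i => s.equivFin.symm i) (fun i => c (s.equivFin.symm i))
  refine ⟨r, hr, ?_⟩
  simp only [← Finset.sum_coe_sort s, ← hsum]
  rw [← s.equivFin.symm.sum_comp]
  simp only [← s.equivFin.symm.sum_comp (fun y : s => c _ * _ * k _ (y : X))]

end IsPositiveTypeKernel

section WeightedKernel

variable {ι X : Type*} [TopologicalSpace X]

def weightedKernel (ρ : PartitionOfUnity ι X) (k : ι → ι → ℂ) (x y : X) : ℂ :=
  ∑ᶠ (i) (j), (ρ i x : ℂ) * ρ j y * k i j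

variable (ρ : PartitionOfUnity ι X) (k : ι → ι → ℂ)

theorem PartitionOfUnity.eq_zero_of_notMem_finsupport {x : X} {i : ι} {s : Finset ι}
    (hs : ρ.finsupport x ⊆ s) (hi : i ∉ s) : ρ i x = 0 := by
  simpa using mt (@hs i) hi

theorem weightedKernel_eq_sum {x y : X} {s t : Finset ι} (hs : ρ.finsupport x ⊆ s)
    (ht : ρ.finsupport y ⊆ t) :
    weightedKernel ρ k x y = ∑ i ∈ s, ∑ j ∈ t, (ρ i x : ℂ) * ρ j y * k i j := by
  rw [weightedKernel, finsum_eq_sum_of_support_subset _ (s := s)]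
  · refine Finset.sum_congr rfl fun i _ => finsum_eq_sum_of_support_subset _ ?_
    refine Function.support_subset_iff'.2 fun j hj => ?_
    simp [ρ.eq_zero_of_notMem_finsupport ht hj]
  · refine Function.support_subset_iff'.2 fun i hi => ?_
    simp [ρ.eq_zero_of_notMem_finsupport hs hi]

theorem continuous_weightedKernel : Continuous (Function.uncurry (weightedKernel ρ k)) := by
  have hρ (i : ι) : Continuous fun x => (ρ i x : ℂ) :=
    Complex.continuous_ofReal.comp (ρ i).continuous
  refine continuous_finsum (fun i => continuous_finsum (fun j => ?_) ?_) ?_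
  · exact (((hρ i).comp continuous_fst).mul ((hρ j).comp continuous_snd)).mul continuous_const
  · refine (ρ.locallyFinite.preimage_continuous continuous_snd).subset fun j p hp h =>
      hp (by simp [h])
  · refine (ρ.locallyFinite.preimage_continuous continuous_fst).subset fun i p hp h =>
      hp (by simp [h])

theorem weightedKernel_eq_zero {x y : X} (h : ∀ i j, ρ i x ≠ 0 → ρ j y ≠ 0 → k i j = 0) :
    weightedKernel ρ k x y = 0 := by
  refine finsum_eq_zero_of_forall_eq_zero fun i => finsum_eq_zero_of_forall_eq_zero fun j => ?_
  by_cases hi : ρ i x = 0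
  · simp [hi]
  by_cases hj : ρ j y = 0
  · simp [hj]
  simp [h i j hi hj]

theorem norm_weightedKernel_sub_one_le {x y : X} {η : ℝ}
    (h : ∀ i j, ρ i x ≠ 0 → ρ j y ≠ 0 → ‖k i j - 1‖ ≤ η) :
    ‖weightedKernel ρ k x y - 1‖ ≤ η := by
  set s := ρ.finsupport x
  set t := ρ.finsupport y
  have hsum : ∑ i ∈ s, ∑ j ∈ t, ρ i x * ρ j y = 1 := by
    rw [← Finset.sum_mul_sum, ρ.sum_finsupport trivial, ρ.sum_finsupport trivial, one_mul]
  have hdiff :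
      weightedKernel ρ k x y - 1 = ∑ i ∈ s, ∑ j ∈ t, (ρ i x : ℂ) * ρ j y * (k i j - 1) := by
    have hsumC : ∑ i ∈ s, ∑ j ∈ t, (ρ i x : ℂ) * ρ j y = 1 := by exact_mod_cast hsum
    simp only [mul_sub, mul_one, Finset.sum_sub_distrib, hsumC,
      weightedKernel_eq_sum ρ k (s := s) (t := t) le_rfl le_rfl]
  calc ‖weightedKernel ρ k x y - 1‖
      ≤ ∑ i ∈ s, ∑ j ∈ t, ρ i x * ρ j y * η := by
        rw [hdiff]
        refine (norm_sum_le _ _).trans (Finset.sum_le_sum fun i hi => ?_)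
        refine (norm_sum_le _ _).trans (Finset.sum_le_sum fun j hj => ?_)
        rw [norm_mul, ← Complex.ofReal_mul, Complex.norm_real, Real.norm_of_nonneg
          (mul_nonneg (ρ.nonneg i x) (ρ.nonneg j y))]
        exact mul_le_mul_of_nonneg_left (h i j (by simpa [s] using hi) (by simpa [t] using hj))
          (mul_nonneg (ρ.nonneg i x) (ρ.nonneg j y))
    _ = η := by simp only [← Finset.sum_mul, hsum, one_mul]

theorem IsPositiveTypeKernel.weightedKernel (hk : IsPositiveTypeKernel k) :
    IsPositiveTypeKernel (weightedKernel ρ k) := by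
  classical
  intro n x c
  let s := Finset.univ.biUnion fun m => ρ.finsupport (x m)
  have hs (m : Fin n) : ρ.finsupport (x m) ⊆ s :=
    Finset.subset_biUnion_of_mem (fun m => ρ.finsupport (x m)) (Finset.mem_univ m)
  -- the quadratic form of `weightedKernel ρ k` at `(x, c)` is that of `k` at the
  -- coefficients `i ↦ ∑ m, c m * ρ i (x m)`
  obtain ⟨r, hr, hsum⟩ := hk.exists_sum_finset_eq s fun i => ∑ m, c m * ρ i (x m)
  refine ⟨r, hr, hsum ▸ ?_⟩
  simp only [weightedKernel_eq_sum ρ k (hs _) (hs _), map_sum, map_mul, Complex.conj_ofReal,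
    Finset.mul_sum, Finset.sum_mul]
  simp only [Finset.sum_comm (s := (Finset.univ : Finset (Fin n))) (t := s)]
  refine Finset.sum_congr rfl fun _ _ => Finset.sum_congr rfl fun _ _ => ?_
  rw [Finset.sum_comm]
  exact Finset.sum_congr rfl fun _ _ => Finset.sum_congr rfl fun _ _ => by ring

end WeightedKernel

theorem PropertyAWith.subsetPropertyA {X : Type*} [TopologicalSpace X] {d : X → X → ℝ}
    (hA : PropertyAWith X d) (Z : Set X) : SubsetPropertyA d Z := by
  intro R hR ε hε
  obtain ⟨S, hS, k, hc, hk, hsupp, hnear⟩ := hA R hR ε hε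
  exact ⟨S, hS, fun z w => k z w, hc.comp (continuous_subtype_val.prodMap continuous_subtype_val),
    hk.comp _, fun z w => hsupp z w, fun z w => hnear z w⟩

namespace IsProperLeftInvariantCompatibleMetric

variable {G : Type*} [Group G] [TopologicalSpace G] {d : G → G → ℝ}

theorem triangle4 (hd : IsProperLeftInvariantCompatibleMetric G d) (x y z w : G) :
    d x w ≤ d x y + d y z + d z w := by
  linarith [hd.triangle x y w, hd.triangle y z w]

theorem nonneg (hd : IsProperLeftInvariantCompatibleMetric G d) (x y : G) : 0 ≤ d x y := by
  linarith [hd.triangle x y x, hd.refl x, hd.symm x y]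

theorem continuous_right (hd : IsProperLeftInvariantCompatibleMetric G d) (z : G) :
    Continuous (d z) := by
  refine continuous_def.2 fun s hs => (hd.compatible _).2 fun x hx => ?_
  obtain ⟨ε, hε, hball⟩ := Metric.isOpen_iff.1 hs _ hx
  refine ⟨ε, hε, fun y hy => hball ?_⟩
  rw [Metric.mem_ball, Real.dist_eq, abs_sub_lt_iff]
  constructor <;> linarith [hd.triangle z x y, hd.triangle z y x, hd.symm x y]

theorem one_inv_mul (hd : IsProperLeftInvariantCompatibleMetric G d) (z x : G) :
    d 1 (z⁻¹ * x) = d z x := by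
  rw [← hd.left_invariant z, mul_one, mul_inv_cancel_left]

theorem exists_pairwise_le_dense (hd : IsProperLeftInvariantCompatibleMetric G d) {δ : ℝ}
    (hδ : 0 < δ) : ∃ Z : Set G, Z.Pairwise (fun z w => δ ≤ d z w) ∧ ∀ x, ∃ z ∈ Z, d z x < δ := by
  obtain ⟨Z, hZ⟩ := zorn_subset {Z : Set G | Z.Pairwise fun z w => δ ≤ d z w}
    fun c hc hchain => ⟨⋃₀ c, (Set.pairwise_sUnion hchain.directedOn).2 hc,
      fun _ => Set.subset_sUnion_of_mem⟩
  refine ⟨Z, hZ.prop, fun x => ?_⟩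
  by_contra! hfar
  have hx : x ∉ Z := fun hx => (hfar x hx).not_gt (by rw [hd.refl]; exact hδ)
  have hins : (insert x Z).Pairwise fun z w => δ ≤ d z w :=
    hZ.prop.insert_of_notMem hx fun z hz => ⟨hd.symm x z ▸ hfar z hz, hfar z hz⟩
  exact hx (hZ.eq_of_subset hins (Set.subset_insert x Z) ▸ Set.mem_insert x Z)

theorem uniformlyLocallyFinite_of_pairwise (hd : IsProperLeftInvariantCompatibleMetric G d)
    {δ : ℝ} (hδ : 0 < δ) {Z : Set G} (hZ : Z.Pairwise fun z w => δ ≤ d z w) :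
    SubsetUniformlyLocallyFinite d Z := by
  intro S _
  obtain ⟨t, ht⟩ := (hd.proper 1 S).elim_finite_subcover (fun g => {y | d g y < δ / 2})
    (fun g => isOpen_lt (hd.continuous_right g) continuous_const)
    fun y _ => Set.mem_iUnion.2 ⟨y, by simp [hd.refl, hδ]⟩
  have hcenter : ∀ y, d 1 y ≤ S → ∃ g ∈ t, d g y < δ / 2 := fun y hy => by
    simpa using ht hy
  choose! f hft hfd using hcenter
  refine ⟨t.card, fun z _ => ?_⟩
  have hmaps : Set.MapsTo (fun x => f (z⁻¹ * x)) {x ∈ Z | d z x ≤ S} t := fun x hx =>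
    hft _ ((hd.one_inv_mul z x).trans_le hx.2)
  have hinj : Set.InjOn (fun x => f (z⁻¹ * x)) {x ∈ Z | d z x ≤ S} := by
    intro a ha b hb hab
    by_contra hne
    have hclose : d (z⁻¹ * a) (z⁻¹ * b) < δ := by
      have hda := hfd _ ((hd.one_inv_mul z a).trans_le ha.2)
      have hdb := hfd _ ((hd.one_inv_mul z b).trans_le hb.2)
      rw [show f (z⁻¹ * a) = f (z⁻¹ * b) from hab] at hda
      linarith [hd.triangle (z⁻¹ * a) (f (z⁻¹ * b)) (z⁻¹ * b), hd.symm (f (z⁻¹ * b)) (z⁻¹ * a)]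
    rw [hd.left_invariant] at hclose
    exact hclose.not_ge (hZ ha.1 hb.1 hne)
  exact ⟨Set.Finite.of_injOn hmaps hinj t.finite_toSet,
    (Set.ncard_le_ncard_of_injOn _ hmaps hinj t.finite_toSet).trans (Set.ncard_coe_finset t).le⟩

theorem exists_isMetricLattice (hd : IsProperLeftInvariantCompatibleMetric G d) :
    ∃ Z : Set G, IsMetricLattice d Z ∧ SubsetUniformlyLocallyFinite d Z := by
  obtain ⟨Z, hsep, hdense⟩ := hd.exists_pairwise_le_dense one_pos
  exact ⟨Z, ⟨⟨1, one_pos, fun z hz w hw => hsep hz hw⟩, 1, one_pos,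
    fun x => (hdense x).imp fun _ hz => ⟨hz.1, hz.2.le⟩⟩,
    hd.uniformlyLocallyFinite_of_pairwise one_pos hsep⟩

section CoarselyDense

variable {Z : Set G} {R : ℝ}

theorem finite_setOf_le (hd : IsProperLeftInvariantCompatibleMetric G d)
    (hcover : ∀ x, ∃ z ∈ Z, d z x ≤ R) (hZ : SubsetUniformlyLocallyFinite d Z) (x : G) (r : ℝ) :
    {z ∈ Z | d z x ≤ r}.Finite := by
  obtain ⟨z₀, hz₀, hx⟩ := hcover x
  obtain ⟨N, hN⟩ := hZ (max (R + r) 1) (lt_max_of_lt_right one_pos)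
  refine (hN z₀ hz₀).1.subset fun z hz => ⟨hz.1, le_max_of_le_left ?_⟩
  linarith [hd.triangle z₀ x z, hd.symm x z, hz.2]

theorem locallyFinite_setOf_lt (hd : IsProperLeftInvariantCompatibleMetric G d)
    (hcover : ∀ x, ∃ z ∈ Z, d z x ≤ R) (hZ : SubsetUniformlyLocallyFinite d Z) (r : ℝ) :
    LocallyFinite fun z : Z => {x | d z x < r} := by
  intro x
  refine ⟨{y | d x y < 1},
    (isOpen_lt (hd.continuous_right x) continuous_const).mem_nhds (by simp [hd.refl]), ?_⟩
  refine ((hd.finite_setOf_le hcover hZ x (r + 1)).preimage Subtype.val_injective.injOn).subset ?_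
  rintro z ⟨y, hzy, hxy⟩
  exact ⟨z.2, by linarith [hd.triangle z y x, hd.symm x y, hzy.out, hxy.out]⟩

theorem exists_partitionOfUnity_lt [NormalSpace G] (hd : IsProperLeftInvariantCompatibleMetric G d)
    (hcover : ∀ x, ∃ z ∈ Z, d z x ≤ R) (hZ : SubsetUniformlyLocallyFinite d Z) :
    ∃ ρ : PartitionOfUnity Z G, ∀ z x, ρ z x ≠ 0 → d z x < R + 1 := by
  obtain ⟨ρ, hρ⟩ := PartitionOfUnity.exists_isSubordinate_of_locallyFinite isClosed_univ
    (fun z : Z => {x | d z x < R + 1}) (fun z => isOpen_lt (hd.continuous_right z) continuous_const)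
    (hd.locallyFinite_setOf_lt hcover hZ _) fun x _ => by
      obtain ⟨z, hz, hzx⟩ := hcover x
      exact Set.mem_iUnion.2 ⟨⟨z, hz⟩, show d z x < R + 1 by linarith⟩
  exact ⟨ρ, fun z x hx => hρ z (subset_tsupport _ hx)⟩

theorem propertyAWith_of_subsetPropertyA [NormalSpace G]
    (hd : IsProperLeftInvariantCompatibleMetric G d) (hcover : ∀ x, ∃ z ∈ Z, d z x ≤ R)
    (hZ : SubsetUniformlyLocallyFinite d Z) (hA : SubsetPropertyA d Z) : PropertyAWith G d := by
  obtain ⟨ρ, hρ⟩ := hd.exists_partitionOfUnity_lt hcover hZ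
  have hR : 0 ≤ R :=
    let ⟨_, _, h⟩ := hcover 1
    (hd.nonneg _ _).trans h
  intro r hr ε hε
  obtain ⟨S, hS, k, -, hk, hsupp, hnear⟩ :=
    hA (r + 2 * (R + 1)) (by positivity) (ε / 2) (by positivity)
  refine ⟨S + 2 * (R + 1), by positivity, weightedKernel ρ k, continuous_weightedKernel ρ k,
    hk.weightedKernel ρ, fun x y hxy => weightedKernel_eq_zero ρ k fun z w hz hw => hsupp z w ?_,
    fun x y hxy => (norm_weightedKernel_sub_one_le ρ k fun z w hz hw => (hnear z w ?_).le).trans_lt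
      (half_lt_self hε)⟩
  · linarith [hd.triangle4 x z w y, hd.symm x z, hρ z x hz, hρ w y hw]
  · linarith [hd.triangle4 z x y w, hd.symm y w, hρ z x hz, hρ w y hw]

end CoarselyDense

end IsProperLeftInvariantCompatibleMetric

theorem propertyA_iff_lattices_propertyA_general
    (G : Type*) [Group G] [TopologicalSpace G]
    [LocallyCompactSpace G] [SecondCountableTopology G] [T2Space G]
    (d : G → G → ℝ) (hd : IsProperLeftInvariantCompatibleMetric G d) :
    List.TFAE
      [PropertyAWith G d,
       ∀ Z : Set G, IsMetricLattice d Z → SubsetUniformlyLocallyFinite d Z →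
         SubsetPropertyA d Z,
       ∃ Z : Set G, IsMetricLattice d Z ∧ SubsetUniformlyLocallyFinite d Z ∧
         SubsetPropertyA d Z] := by
  tfae_have 1 → 2 := fun hA Z _ _ => hA.subsetPropertyA Z
  tfae_have 2 → 3 := fun hA =>
    let ⟨Z, hlat, hZ⟩ := hd.exists_isMetricLattice
    ⟨Z, hlat, hZ, hA Z hlat hZ⟩
  tfae_have 3 → 1 := fun ⟨_, ⟨_, _, _, hcover⟩, hZ, hA⟩ =>
    hd.propertyAWith_of_subsetPropertyA hcover hZ hA
  tfae_finish

/-- For a locally compact second countable group with a proper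
left-invariant compatible metric `d`, property A of `(G,d)` is equivalent to all
(resp. some) uniformly locally finite metric lattice in `G` having Yu's property A. -/
theorem propertyA_iff_lattices_propertyA
    (G : Type*) [Group G] [TopologicalSpace G] [IsTopologicalGroup G]
    [LocallyCompactSpace G] [SecondCountableTopology G] [T2Space G]
    (d : G → G → ℝ) (hd : IsProperLeftInvariantCompatibleMetric G d) :
    List.TFAE
      [PropertyAWith G d,
       ∀ Z : Set G, IsMetricLattice d Z → SubsetUniformlyLocallyFinite d Z →
         SubsetPropertyA d Z,
       ∃ Z : Set G, IsMetricLattice d Z ∧ SubsetUniformlyLocallyFinite d Z ∧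
         SubsetPropertyA d Z] :=
  propertyA_iff_lattices_propertyA_general G d hd
end
end
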